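/- arXiv:1905.03560 — 3 statements merged into one kernel-verified Lean document; each statement's English description precedes it below -/
import Mathlib

section
/- Let α₁, α₂, β₁, β₂ be words over an alphabet Σ with |β₁| = |β₂|, and suppose del(α₁, α₂) = del(α₁β₁, α₂β₂). Then for all n ≥ 0, del(α₁β₁ⁿ, α₂β₂ⁿ) = del(α₁, α₂). -/
/-- Longest common prefix of two words. -/
def lcp {α : Type*} [DecidableEq α] : List α → List α → List α
  | a :: u, b :: v => if a = b then a :: lcp u v else []
  | _, _ => []

/-- The delay of two words. -/
def del {α : Type*} [DecidableEq α] (u v : List α) : List α × List α :=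
  (u.drop (lcp u v).length, v.drop (lcp u v).length)

/-- n-fold concatenation of a word with itself. -/
def wpow {α : Type*} (β : List α) : ℕ → List α
  | 0 => []
  | n + 1 => β ++ wpow β n

/-- Mismatch: the two words do not start with the same letter. -/
def mm {α : Type*} : List α → List α → Prop
  | a :: _, b :: _ => a ≠ b
  | _, _ => True

lemma lcp_append {α : Type*} [DecidableEq α] (ℓ u v : List α) :
    lcp (ℓ ++ u) (ℓ ++ v) = ℓ ++ lcp u v := by
  induction ℓ with
  | nil => rfl
  | cons a t ih => simp [lcp, ih]

lemma lcp_nil_of_mm {α : Type*} [DecidableEq α] (u v : List α) (h : mm u v) :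
    lcp u v = [] := by
  cases u <;> cases v <;> simp_all [lcp, mm]

lemma del_of_mm {α : Type*} [DecidableEq α] (ℓ u v : List α) (h : mm u v) :
    del (ℓ ++ u) (ℓ ++ v) = (u, v) := by
  simp [del, lcp_append, lcp_nil_of_mm u v h, List.drop_left]

lemma lcp_prefix_left {α : Type*} [DecidableEq α] :
    ∀ (u v : List α), lcp u v <+: u
  | [], _ => by simp [lcp]
  | _ :: _, [] => by simp [lcp]
  | a :: u, b :: v => by
    by_cases h : a = b
    · simpa [lcp, h, List.cons_prefix_cons] using lcp_prefix_left u v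
    · simp [lcp, h]

lemma lcp_prefix_right {α : Type*} [DecidableEq α] :
    ∀ (u v : List α), lcp u v <+: v
  | [], _ => by simp [lcp]
  | _ :: _, [] => by simp [lcp]
  | a :: u, b :: v => by
    by_cases h : a = b
    · simpa [lcp, h, List.cons_prefix_cons] using lcp_prefix_right u v
    · simp [lcp, h]

lemma mm_drop {α : Type*} [DecidableEq α] :
    ∀ (u v : List α), mm (u.drop (lcp u v).length) (v.drop (lcp u v).length)
  | [], v => by cases v <;> simp [lcp, mm]
  | _ :: _, [] => by simp [lcp, mm]
  | a :: u, b :: v => by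
    by_cases h : a = b
    · simpa [lcp, h] using mm_drop u v
    · simp [lcp, h, mm]

lemma wpow_pump {α : Type*} (u β γ : List α) (h : u ++ β = γ ++ u) :
    ∀ n, u ++ wpow β n = wpow γ n ++ u := by
  intro n
  induction n with
  | zero => simp [wpow]
  | succ n ih =>
    calc u ++ wpow β (n + 1) = (u ++ β) ++ wpow β n := by simp [wpow]
    _ = γ ++ (u ++ wpow β n) := by rw [h]; simp
    _ = γ ++ (wpow γ n ++ u) := by rw [ih]
    _ = wpow γ (n + 1) ++ u := by simp [wpow]

theorem del_pump {α : Type*} [DecidableEq α] (α₁ α₂ β₁ β₂ : List α)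
    (hlen : β₁.length = β₂.length)
    (hdel : del α₁ α₂ = del (α₁ ++ β₁) (α₂ ++ β₂)) :
    ∀ n : ℕ, del (α₁ ++ wpow β₁ n) (α₂ ++ wpow β₂ n) = del α₁ α₂ := by
  intro n
  have e1 : α₁.drop (lcp α₁ α₂).length
      = (α₁ ++ β₁).drop (lcp (α₁ ++ β₁) (α₂ ++ β₂)).length := congrArg Prod.fst hdel
  have e2 : α₂.drop (lcp α₁ α₂).length
      = (α₂ ++ β₂).drop (lcp (α₁ ++ β₁) (α₂ ++ β₂)).length := congrArg Prod.snd hdel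
  set ℓ := lcp α₁ α₂ with hℓdef
  set ℓ' := lcp (α₁ ++ β₁) (α₂ ++ β₂) with hℓ'def
  set u₁ := α₁.drop ℓ.length with hu₁def
  set u₂ := α₂.drop ℓ.length with hu₂def
  have h1 : ℓ ++ u₁ = α₁ := List.prefix_iff_eq_append.1 (lcp_prefix_left α₁ α₂)
  have h2 : ℓ ++ u₂ = α₂ := List.prefix_iff_eq_append.1 (lcp_prefix_right α₁ α₂)
  have h3 : ℓ' ++ u₁ = α₁ ++ β₁ := by
    rw [e1]; exact List.prefix_iff_eq_append.1 (lcp_prefix_left _ _)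
  have h4 : ℓ' ++ u₂ = α₂ ++ β₂ := by
    rw [e2]; exact List.prefix_iff_eq_append.1 (lcp_prefix_right _ _)
  have hlen' : ℓ.length ≤ ℓ'.length := by
    have t1 := congrArg List.length h1
    have t3 := congrArg List.length h3
    simp only [List.length_append] at t1 t3
    omega
  have hpre : ℓ <+: ℓ' :=
    List.prefix_of_prefix_length_le
      ((lcp_prefix_left α₁ α₂).trans (List.prefix_append α₁ β₁))
      (lcp_prefix_left _ _) hlen'
  obtain ⟨γ, hγ⟩ := hpre
  have c1 : u₁ ++ β₁ = γ ++ u₁ := by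
    have key : ℓ ++ (u₁ ++ β₁) = ℓ ++ (γ ++ u₁) := by
      calc ℓ ++ (u₁ ++ β₁) = (ℓ ++ u₁) ++ β₁ := by rw [List.append_assoc]
      _ = α₁ ++ β₁ := by rw [h1]
      _ = ℓ' ++ u₁ := h3.symm
      _ = (ℓ ++ γ) ++ u₁ := by rw [hγ]
      _ = ℓ ++ (γ ++ u₁) := by rw [List.append_assoc]
    exact List.append_cancel_left key
  have c2 : u₂ ++ β₂ = γ ++ u₂ := by
    have key : ℓ ++ (u₂ ++ β₂) = ℓ ++ (γ ++ u₂) := by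
      calc ℓ ++ (u₂ ++ β₂) = (ℓ ++ u₂) ++ β₂ := by rw [List.append_assoc]
      _ = α₂ ++ β₂ := by rw [h2]
      _ = ℓ' ++ u₂ := h4.symm
      _ = (ℓ ++ γ) ++ u₂ := by rw [hγ]
      _ = ℓ ++ (γ ++ u₂) := by rw [List.append_assoc]
    exact List.append_cancel_left key
  have hmm : mm u₁ u₂ := mm_drop α₁ α₂
  have hd : del α₁ α₂ = (u₁, u₂) := rfl
  have w1 : α₁ ++ wpow β₁ n = (ℓ ++ wpow γ n) ++ u₁ := by
    rw [← h1, List.append_assoc, wpow_pump u₁ β₁ γ c1 n, List.append_assoc]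
  have w2 : α₂ ++ wpow β₂ n = (ℓ ++ wpow γ n) ++ u₂ := by
    rw [← h2, List.append_assoc, wpow_pump u₂ β₂ γ c2 n, List.append_assoc]
  rw [hd, w1, w2]
  exact del_of_mm _ _ _ hmm
end

section
/- Every word u over the alphabet {1,…,n} with |u| ≥ 2ⁿ contains a bad j-pair for some 1 ≤ j ≤ n. -/
/-- `u` has a bad `j`-pair: two positions `k < k'` carrying letter `j` such that
all letters strictly between them are `≤ j`. (Positions are 0-indexed.) -/
def HasBadPair (u : List ℕ) (j : ℕ) : Prop :=
  ∃ k k' : ℕ, k < k' ∧ k' < u.length ∧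
    u.getD k 0 = j ∧ u.getD k' 0 = j ∧
    ∀ l : ℕ, k < l → l < k' → u.getD l 0 ≤ j

/-!
Induct on the alphabet, say of `n + 1` letters, removing its largest letter `a`. If `a` occurs
twice in `u`, any two occurrences form a bad `a`-pair, since nothing exceeds `a`. Otherwise deleting
the (at most one) occurrence of `a` splits `u` into two factors over the smaller alphabet, one of
which has at least half of the remaining `|u| - 1 ≥ 2 ^ (n + 1) - 1` letters, hence at least `2 ^ n`
of them, and a bad pair in a factor is a bad pair in `u`.
-/

lemma List.getD_append_append_length_add {α : Type*} (s w t : List α) (d : α) {i : ℕ}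
    (hi : i < w.length) : (s ++ w ++ t).getD (s.length + i) d = w.getD i d := by
  rw [List.append_assoc, List.getD_append_right _ _ _ _ (by omega), Nat.add_sub_cancel_left,
    List.getD_append _ _ _ _ hi]

namespace HasBadPair

theorem of_infix {w u : List ℕ} {j : ℕ} (hwu : w <:+: u) (hw : HasBadPair w j) :
    HasBadPair u j := by
  obtain ⟨s, t, rfl⟩ := hwu
  obtain ⟨k, k', hkk', hk', hk, hk'j, hbetween⟩ := hw
  have hget : ∀ i < w.length, (s ++ w ++ t).getD (s.length + i) 0 = w.getD i 0 :=
    fun i hi => List.getD_append_append_length_add s w t 0 hi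
  refine ⟨s.length + k, s.length + k', by omega, by simp; omega,
    by rw [hget k (by omega), hk], by rw [hget k' hk', hk'j], fun l hl hl' => ?_⟩
  obtain ⟨i, rfl⟩ : ∃ i, l = s.length + i := ⟨l - s.length, by omega⟩
  rw [hget i (by omega)]
  exact hbetween i (by omega) (by omega)

theorem of_two_le_count_of_forall_le {u : List ℕ} {j : ℕ} (hle : ∀ x ∈ u, x ≤ j)
    (hcount : 2 ≤ u.count j) : HasBadPair u j := by
  obtain ⟨k, k', hkk', hk, hk'⟩ :=
    List.duplicate_iff_exists_distinct_get.mp (List.duplicate_iff_two_le_count.mpr hcount)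
  refine ⟨k, k', hkk', k'.isLt, by simp [hk], by simp [hk'], fun l _ hl => ?_⟩
  rw [List.getD_eq_getElem _ _ (by omega)]
  exact hle _ (List.getElem_mem _)

end HasBadPair

theorem List.exists_infix_not_mem_of_count_le_one {α : Type*} [DecidableEq α] {u : List α}
    {a : α} (hcount : u.count a ≤ 1) : ∃ w, w <:+: u ∧ a ∉ w ∧ u.length ≤ 2 * w.length + 1 := by
  by_cases ha : a ∈ u
  · obtain ⟨s, t, rfl⟩ := List.append_of_mem ha
    simp only [List.count_append, List.count_cons_self] at hcount
    have hs : a ∉ s := List.count_eq_zero.mp (by omega)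
    have ht : a ∉ t := List.count_eq_zero.mp (by omega)
    have hlen : (s ++ a :: t).length = s.length + t.length + 1 := by simp; omega
    rcases le_total t.length s.length with hts | hst
    · exact ⟨s, List.infix_append [] s (a :: t), hs, by omega⟩
    · exact ⟨t, ⟨s ++ [a], [], by simp⟩, ht, by omega⟩
  · exact ⟨u, List.infix_rfl, ha, by omega⟩

theorem exists_hasBadPair_of_two_pow_card_le (s : Finset ℕ) (u : List ℕ) (hu : ∀ x ∈ u, x ∈ s)
    (hlen : 2 ^ s.card ≤ u.length) : ∃ j ∈ s, HasBadPair u j := by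
  induction s using Finset.induction_on_max generalizing u with
  | empty =>
    rw [Finset.card_empty, pow_zero] at hlen
    obtain ⟨x, hx⟩ := List.exists_mem_of_length_pos hlen
    exact absurd (hu x hx) (Finset.notMem_empty x)
  | insert a s hlt ih =>
    by_cases hcount : 2 ≤ u.count a
    · refine ⟨a, Finset.mem_insert_self a s, HasBadPair.of_two_le_count_of_forall_le ?_ hcount⟩
      intro x hx
      rcases Finset.mem_insert.mp (hu x hx) with rfl | hxs
      exacts [le_rfl, (hlt x hxs).le]
    · obtain ⟨w, hwu, haw, hw⟩ := List.exists_infix_not_mem_of_count_le_one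
        (Nat.le_of_lt_succ (not_le.mp hcount))
      have hws : ∀ x ∈ w, x ∈ s := fun x hx =>
        (Finset.mem_insert.mp (hu x (hwu.subset hx))).resolve_left (ne_of_mem_of_not_mem hx haw)
      have ha : a ∉ s := fun ha => (hlt a ha).false
      rw [Finset.card_insert_of_notMem ha, pow_succ] at hlen
      obtain ⟨j, hjs, hj⟩ := ih w hws (by omega)
      exact ⟨j, Finset.mem_insert_of_mem hjs, hj.of_infix hwu⟩

theorem long_word_has_bad_pair (n : ℕ) (u : List ℕ)
    (halpha : ∀ x ∈ u, 1 ≤ x ∧ x ≤ n) (hlen : 2 ^ n ≤ u.length) :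
    ∃ j : ℕ, 1 ≤ j ∧ j ≤ n ∧ HasBadPair u j := by
  obtain ⟨j, hj, hbad⟩ := exists_hasBadPair_of_two_pow_card_le (Finset.Icc 1 n) u
    (fun x hx => Finset.mem_Icc.mpr (halpha x hx)) (by simpa using hlen)
  obtain ⟨hj1, hjn⟩ := Finset.mem_Icc.mp hj
  exact ⟨j, hj1, hjn, hbad⟩
end

section
/- For every n ≥ 1, there exists a word over the alphabet {1,…,n} of length 2ⁿ − 1 that contains no bad j-pair for any 1 ≤ j ≤ n (e.g., the word defined inductively by w₁ = 1 and w_{n+1} = wₙ · (n+1) · wₙ). -/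
/-!
In `w ++ m :: w` every letter of `w` is smaller than `m`. A bad `m`-pair would need two
occurrences of `m`, but there is only one; a bad `j`-pair with `j < m` cannot enclose the
middle letter `m`, so it lies inside one copy of `w`, and induction applies.
-/

namespace List

variable {p q : List ℕ} {m : ℕ}

theorem getD_append_cons_length : (p ++ m :: q).getD p.length 0 = m := by
  simp

theorem getD_append_cons_add_length (i : ℕ) :
    (p ++ m :: q).getD (p.length + i + 1) 0 = q.getD i 0 := by
  rw [getD_append_right _ _ _ _ (by omega), show p.length + i + 1 - p.length = i + 1 by omega,
    getD_cons_succ]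

theorem getD_mem_of_lt {u : List ℕ} {k : ℕ} (hk : k < u.length) : u.getD k 0 ∈ u := by
  rw [getD_eq_getElem _ _ hk]
  exact getElem_mem hk

theorem eq_length_of_getD_append_cons {i j : ℕ} (hp : j ∉ p) (hq : j ∉ q)
    (hi : i < (p ++ m :: q).length) (hij : (p ++ m :: q).getD i 0 = j) : i = p.length := by
  rcases lt_trichotomy i p.length with hlt | heq | hgt
  · rw [getD_append _ _ _ _ hlt] at hij
    exact absurd (hij ▸ getD_mem_of_lt hlt) hp
  · exact heq
  · obtain ⟨t, rfl⟩ := Nat.exists_eq_add_of_lt hgt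
    simp only [length_append, length_cons] at hi
    rw [getD_append_cons_add_length] at hij
    exact absurd (hij ▸ getD_mem_of_lt (by omega)) hq

end List

open List

section BadPair

variable {p q : List ℕ} {m j : ℕ}

theorem not_hasBadPair_append_cons_of_not_mem (hp : j ∉ p) (hq : j ∉ q) :
    ¬ HasBadPair (p ++ m :: q) j := by
  rintro ⟨k, k', hkk', hk', hk, hk'j, -⟩
  have := eq_length_of_getD_append_cons hp hq (hkk'.trans hk') hk
  have := eq_length_of_getD_append_cons hp hq hk' hk'j
  omega

theorem HasBadPair.of_append_left {u : List ℕ} (v : List ℕ) {k k' : ℕ} (hkk' : k < k')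
    (hk' : k' < u.length) (hk : (u ++ v).getD k 0 = j) (hk'j : (u ++ v).getD k' 0 = j)
    (hbetween : ∀ l, k < l → l < k' → (u ++ v).getD l 0 ≤ j) : HasBadPair u j := by
  refine ⟨k, k', hkk', hk', ?_, ?_, fun l hkl hlk' => ?_⟩
  · rwa [← getD_append _ v _ _ (by omega)]
  · rwa [← getD_append _ v _ _ hk']
  · rw [← getD_append _ v _ _ (by omega)]
    exact hbetween l hkl hlk'

theorem HasBadPair.of_append_cons (hjm : j < m) (h : HasBadPair (p ++ m :: q) j) :
    HasBadPair p j ∨ HasBadPair q j := by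
  obtain ⟨k, k', hkk', hk', hk, hk'j, hbetween⟩ := h
  have hmid := getD_append_cons_length (p := p) (m := m) (q := q)
  rcases lt_trichotomy k' p.length with hlt | heq | hgt
  · exact .inl (.of_append_left _ hkk' hlt hk hk'j hbetween)
  · rw [heq, hmid] at hk'j
    omega
  rcases lt_trichotomy k p.length with hlt | heq | hgt'
  · have := hbetween _ hlt hgt
    omega
  · rw [heq, hmid] at hk
    omega
  obtain ⟨t, rfl⟩ := Nat.exists_eq_add_of_lt hgt'
  obtain ⟨t', rfl⟩ := Nat.exists_eq_add_of_lt hgt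
  simp only [length_append, length_cons] at hk'
  rw [getD_append_cons_add_length] at hk hk'j
  refine .inr ⟨t, t', by omega, by omega, hk, hk'j, fun l htl hlt' => ?_⟩
  have := hbetween (p.length + l + 1) (by omega) (by omega)
  rwa [getD_append_cons_add_length] at this

end BadPair

/-- `1 2 1 3 1 2 1 …`: its `i`-th letter (counting from 1) is one more than the 2-adic
valuation of `i`. -/
def rulerWord : ℕ → List ℕ
  | 0 => []
  | n + 1 => rulerWord n ++ (n + 1) :: rulerWord n

theorem length_rulerWord (n : ℕ) : (rulerWord n).length = 2 ^ n - 1 := by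
  induction n with
  | zero => rfl
  | succ n ih =>
    simp only [rulerWord, length_append, length_cons, ih, pow_succ]
    have := Nat.one_le_two_pow (n := n)
    omega

theorem mem_rulerWord {n x : ℕ} : x ∈ rulerWord n ↔ 1 ≤ x ∧ x ≤ n := by
  induction n with
  | zero => simp only [rulerWord, not_mem_nil, false_iff]; omega
  | succ n ih =>
    simp only [rulerWord, mem_append, mem_cons, ih]
    omega

theorem not_hasBadPair_rulerWord (n j : ℕ) : ¬ HasBadPair (rulerWord n) j := by
  induction n with
  | zero => rintro ⟨k, k', -, hk', -⟩; simp [rulerWord] at hk'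
  | succ n ih =>
    rw [rulerWord]
    intro h
    rcases Nat.lt_or_ge j (n + 1) with hj | hj
    · exact (h.of_append_cons hj).elim ih ih
    · have : j ∉ rulerWord n := fun hmem => by have := (mem_rulerWord.1 hmem).2; omega
      exact not_hasBadPair_append_cons_of_not_mem this this h

theorem exists_long_word_without_bad_pair_general (n : ℕ) :
    ∃ u : List ℕ, (∀ x ∈ u, 1 ≤ x ∧ x ≤ n) ∧ u.length = 2 ^ n - 1 ∧
      ∀ j : ℕ, 1 ≤ j → j ≤ n → ¬ HasBadPair u j :=
  ⟨rulerWord n, fun _ => mem_rulerWord.1, length_rulerWord n,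
    fun j _ _ => not_hasBadPair_rulerWord n j⟩

theorem exists_long_word_without_bad_pair (n : ℕ) (hn : 1 ≤ n) :
    ∃ u : List ℕ, (∀ x ∈ u, 1 ≤ x ∧ x ≤ n) ∧ u.length = 2 ^ n - 1 ∧
      ∀ j : ℕ, 1 ≤ j → j ≤ n → ¬ HasBadPair u j :=
  exists_long_word_without_bad_pair_general n
end
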